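/- Proposition 4 (degradation to a one-way signalling ordered process): Let W be a two-party process matrix on A_I ⊗ A_O ⊗ B_I ⊗ B_O. Then (a) D_{A_O}(W) is a two-party process matrix causally ordered B≺A, and D_{B_O}(W) is a two-party process matrix causally ordered A≺B; and (b) if W is not free (i.e., D_{A_O B_O}(W) ≠ W), then at least one of D_{A_O}(W), D_{B_O}(W) is not free. Equivalently, if both D_{A_O}(W) = D_{A_O B_O}(W) and D_{B_O}(W) = D_{A_O B_O}(W) hold, then W = D_{A_O B_O}(W). -/

import Mathlib

open scoped BigOperators ComplexOrder

/-- Trace-and-replace map `D_X` on the collection `S` of tensor factors: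
`D_S(W) = (1/d_S) * (1_S ⊗ tr_S(W))`, written entrywise. -/
noncomputable def Dset {ι : Type} [Fintype ι] [DecidableEq ι] {F : ι → Type}
    [∀ i, Fintype (F i)] [∀ i, DecidableEq (F i)]
    (S : Finset ι) (M : Matrix ((i : ι) → F i) ((i : ι) → F i) ℂ) :
    Matrix ((i : ι) → F i) ((i : ι) → F i) ℂ :=
  fun p q =>
    ((if ∀ i ∈ S, p i = q i then (1 : ℂ) else 0) / ∏ i ∈ S, (Fintype.card (F i) : ℂ)) *
      ((∑ r : (i : ι) → F i,
          M (fun i => if i ∈ S then r i else p i) (fun i => if i ∈ S then r i else q i)) /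
        ∏ i ∈ Sᶜ, (Fintype.card (F i) : ℂ))

/-- Index of the two-party space `A_I ⊗ A_O ⊗ B_I ⊗ B_O`:
slot `0 = A_I`, `1 = A_O`, `2 = B_I`, `3 = B_O`, with dimensions `d i`. -/
abbrev PIdx (d : Fin 4 → ℕ) : Type := (i : Fin 4) → Fin (d i)

abbrev PMat (d : Fin 4 → ℕ) : Type := Matrix (PIdx d) (PIdx d) ℂ

/-- The projector `L_V` onto the subspace of valid two-party process matrices. -/
noncomputable def LV {d : Fin 4 → ℕ} (W : PMat d) : PMat d :=
  Dset ({1} : Finset (Fin 4)) W + Dset ({3} : Finset (Fin 4)) W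
    - Dset ({1, 3} : Finset (Fin 4)) W - Dset ({2, 3} : Finset (Fin 4)) W
    + Dset ({1, 2, 3} : Finset (Fin 4)) W - Dset ({0, 1} : Finset (Fin 4)) W
    + Dset ({0, 1, 3} : Finset (Fin 4)) W

/-- Two-party process matrix: positive semidefinite, `L_V(W) = W`,
and `tr W = d_{A_O} * d_{B_O}`. -/
def IsProc {d : Fin 4 → ℕ} (W : PMat d) : Prop :=
  W.PosSemidef ∧ LV W = W ∧ W.trace = (d 1 : ℂ) * (d 3 : ℂ)

/-- Free (non-signalling) process matrix: a process matrix with `D_{A_O B_O}(W) = W`. -/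
def IsFree {d : Fin 4 → ℕ} (W : PMat d) : Prop :=
  IsProc W ∧ Dset ({1, 3} : Finset (Fin 4)) W = W

/-- Signalling robustness. -/
noncomputable def Rs {d : Fin 4 → ℕ} (W : PMat d) : ℝ :=
  sInf { s : ℝ | 0 ≤ s ∧ ∃ T C : PMat d, IsProc T ∧ IsFree C ∧
    W + (s : ℂ) • T = ((1 + s : ℝ) : ℂ) • C }

/-- Causal order `A ≺ B`: `D_{B_O}(W) = W` and `D_{B_O B_I}(W) = D_{B_O B_I A_O}(W)`. -/
def OrderedAB {d : Fin 4 → ℕ} (W : PMat d) : Prop :=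
  Dset ({3} : Finset (Fin 4)) W = W ∧
    Dset ({2, 3} : Finset (Fin 4)) W = Dset ({1, 2, 3} : Finset (Fin 4)) W

/-- Causal order `B ≺ A`: `D_{A_O}(W) = W` and `D_{A_O A_I}(W) = D_{A_O A_I B_O}(W)`. -/
def OrderedBA {d : Fin 4 → ℕ} (W : PMat d) : Prop :=
  Dset ({1} : Finset (Fin 4)) W = W ∧
    Dset ({0, 1} : Finset (Fin 4)) W = Dset ({0, 1, 3} : Finset (Fin 4)) W

/-!
Each `D_X` is a positive, trace-preserving map, and the maps compose by union of the traced
factors, `D_X ∘ D_Y = D_{X ∪ Y}`. Applying `D_{A_I A_O}` and `D_{B_I B_O}` to `L_V(W) = W`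
turns the projector condition into `D_{A_I A_O} W = D_{A_I A_O B_O} W`,
`D_{B_I B_O} W = D_{A_O B_I B_O} W` and `W = D_{A_O} W + D_{B_O} W - D_{A_O B_O} W`.
The first two relations survive `D_{A_O}` resp. `D_{B_O}` and are exactly the causal orders;
the last one shows that `W = D_{A_O B_O} W` once `D_{A_O} W = D_{B_O} W = D_{A_O B_O} W`.
-/

open Finset
open scoped Matrix

section Piecewise

variable {ι : Type*} [DecidableEq ι] {π : ι → Type*}

lemma piecewise_piecewise_union (S T : Finset ι) (p r s : ∀ i, π i) :
    T.piecewise s (S.piecewise r p) = (S ∪ T).piecewise (T.piecewise s r) p := by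
  ext i
  by_cases hT : i ∈ T <;> by_cases hS : i ∈ S <;> simp [hS, hT]

lemma forall_eq_and_forall_piecewise_eq_iff (S T : Finset ι) (p q r : ∀ i, π i) :
    ((∀ i ∈ S, p i = q i) ∧ ∀ i ∈ T, S.piecewise r p i = S.piecewise r q i) ↔
      ∀ i ∈ S ∪ T, p i = q i := by
  refine ⟨fun ⟨hS, hT⟩ i hi => ?_,
    fun h => ⟨fun i hi => h i (mem_union_left T hi), fun i hi => ?_⟩⟩
  · by_cases hiS : i ∈ S
    · exact hS i hiS
    · simpa [hiS] using hT i ((mem_union.1 hi).resolve_left hiS)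
  · by_cases hiS : i ∈ S
    · simp [hiS]
    · simpa [hiS] using h i (mem_union_right S hi)

/-- The substitution `(r, s) ↦ (T.piecewise s r, T.piecewise r s)` is an involution of pairs
taking `T.piecewise s r` to `r`. -/
lemma sum_sum_piecewise [Fintype ι] [∀ i, Fintype (π i)] {R : Type*} [AddCommMonoid R]
    (T : Finset ι) (f : (∀ i, π i) → R) :
    ∑ r, ∑ s, f (T.piecewise s r) = Fintype.card (∀ i, π i) • ∑ u, f u := by
  let g (x : (∀ i, π i) × (∀ i, π i)) := (T.piecewise x.2 x.1, T.piecewise x.1 x.2)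
  have hg : Function.Involutive g := fun x => by
    ext i <;> by_cases hi : i ∈ T <;> simp [g, hi]
  calc ∑ r, ∑ s, f (T.piecewise s r)
      = ∑ x, f (g x).1 := (Fintype.sum_prod_type' _).symm
    _ = ∑ x, f x.1 := Fintype.sum_bijective g hg.bijective _ _ fun _ => rfl
    _ = Fintype.card (∀ i, π i) • ∑ u, f u := by
        rw [Fintype.sum_prod_type, ← sum_comm]
        simp [sum_const]

end Piecewise

section TraceAndReplace

variable {ι : Type} [Fintype ι] [DecidableEq ι] {F : ι → Type} [∀ i, Fintype (F i)]
  [∀ i, DecidableEq (F i)]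

lemma Dset_apply (S : Finset ι) (M : Matrix (∀ i, F i) (∀ i, F i) ℂ) (p q : ∀ i, F i) :
    Dset S M p q = (if ∀ i ∈ S, p i = q i then 1 else 0) *
      (∑ r, M (S.piecewise r p) (S.piecewise r q)) / Fintype.card (∀ i, F i) := by
  rw [Dset, div_mul_div_comm, prod_mul_prod_compl, Fintype.card_pi, Nat.cast_prod]
  rfl

lemma Dset_add (S : Finset ι) (M N : Matrix (∀ i, F i) (∀ i, F i) ℂ) :
    Dset S (M + N) = Dset S M + Dset S N := by
  ext p q
  simp only [Matrix.add_apply, Dset_apply, sum_add_distrib, mul_add, add_div]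

lemma Dset_sub (S : Finset ι) (M N : Matrix (∀ i, F i) (∀ i, F i) ℂ) :
    Dset S (M - N) = Dset S M - Dset S N := by
  ext p q
  simp only [Matrix.sub_apply, Dset_apply, sum_sub_distrib, mul_sub, sub_div]

lemma Dset_Dset (S T : Finset ι) (M : Matrix (∀ i, F i) (∀ i, F i) ℂ) :
    Dset S (Dset T M) = Dset (S ∪ T) M := by
  ext p q
  have hN : (Fintype.card (∀ i, F i) : ℂ) ≠ 0 :=
    Nat.cast_ne_zero.2 (@Fintype.card_ne_zero _ _ ⟨p⟩)
  set g := fun u => M ((S ∪ T).piecewise u p) ((S ∪ T).piecewise u q)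
  have inner (r : ∀ i, F i) :
      (if ∀ i ∈ S, p i = q i then 1 else 0) * Dset T M (S.piecewise r p) (S.piecewise r q) =
        (if ∀ i ∈ S ∪ T, p i = q i then 1 else 0) * (∑ s, g (T.piecewise s r)) /
          Fintype.card (∀ i, F i) := by
    rw [Dset_apply, ← mul_div_assoc, ← mul_assoc, ite_zero_mul_ite_zero, one_mul,
      if_congr (forall_eq_and_forall_piecewise_eq_iff S T p q r) rfl rfl]
    simp only [g, piecewise_piecewise_union]
  rw [Dset_apply, Dset_apply, mul_sum]
  simp only [inner]
  rw [← sum_div, ← mul_sum, sum_sum_piecewise, nsmul_eq_mul]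
  field_simp
  rfl

lemma Dset_trace (S : Finset ι) (M : Matrix (∀ i, F i) (∀ i, F i) ℂ) :
    (Dset S M).trace = M.trace := by
  obtain _ | ⟨⟨p⟩⟩ := isEmpty_or_nonempty (∀ i, F i)
  · simp [Matrix.trace]
  have hN : (Fintype.card (∀ i, F i) : ℂ) ≠ 0 :=
    Nat.cast_ne_zero.2 (@Fintype.card_ne_zero _ _ ⟨p⟩)
  simp only [Matrix.trace, Matrix.diag, Dset_apply, implies_true, if_true, one_mul]
  rw [← sum_div, sum_sum_piecewise S fun u => M u u, nsmul_eq_mul, mul_div_cancel_left₀ _ hN]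

/-- Kraus form of the trace-and-replace map,
`1_S ⊗ tr_S M = ∑_{a,c} (|c⟩⟨a| ⊗ 1) M (|a⟩⟨c| ⊗ 1)`. Here `a` ranges over full indices, of
which only the part on `S` matters; the overcounting is absorbed by the normalisation of `Dset`. -/
lemma Dset_eq_smul_sum (S : Finset ι) (M : Matrix (∀ i, F i) (∀ i, F i) ℂ) :
    Dset S M = (Fintype.card (∀ i, F i) : ℂ)⁻¹ • ∑ a, ∑ c : (∀ i : S, F i),
      let P := Matrix.diagonal fun p => if S.restrict p = c then (1 : ℂ) else 0
      P * M.submatrix (S.piecewise a ·) (S.piecewise a ·) * Pᴴ := by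
  ext p q
  have hagree : (∀ i ∈ S, p i = q i) ↔ S.restrict p = S.restrict q := by
    simp [funext_iff]
  simp only [Dset_apply, Matrix.smul_apply, Matrix.sum_apply, Matrix.diagonal_mul,
    Matrix.mul_diagonal, Matrix.diagonal_conjTranspose, Matrix.submatrix_apply, Pi.star_apply,
    apply_ite star, star_one, star_zero, ite_mul, one_mul, zero_mul, mul_ite, mul_one, mul_zero,
    sum_ite_eq, mem_univ, if_true, smul_eq_mul, hagree]
  split_ifs <;> simp [div_eq_inv_mul]

lemma Dset_posSemidef (S : Finset ι) {M : Matrix (∀ i, F i) (∀ i, F i) ℂ}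
    (hM : M.PosSemidef) : (Dset S M).PosSemidef := by
  rw [Dset_eq_smul_sum]
  refine .smul (Matrix.posSemidef_sum _ fun a _ => Matrix.posSemidef_sum _ fun c _ =>
    (hM.submatrix _).mul_mul_conjTranspose_same _) ?_
  positivity

end TraceAndReplace

section TwoParty

variable {d : Fin 4 → ℕ}

/- Writing the literal finsets as unions of singletons lets `simp` normalise the unions produced
by `Dset_Dset` up to associativity, commutativity and idempotence. -/
lemma LV_eq_self_iff (W : PMat d) :
    LV W = W ↔ Dset {0, 1} W = Dset {0, 1, 3} W ∧ Dset {2, 3} W = Dset {1, 2, 3} W ∧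
      Dset {1} W + Dset {3} W - Dset {1, 3} W = W := by
  refine ⟨fun h => ?_, fun ⟨h01, h23, h⟩ => ?_⟩
  · have h01 : Dset {0, 1} W = Dset {0, 1, 3} W := by
      have := congrArg (Dset {0, 1}) h
      simp only [LV, Dset_add, Dset_sub, Dset_Dset, insert_eq, union_comm, union_left_comm,
        union_idempotent, union_left_idem] at this ⊢
      linear_combination (norm := abel) -this
    have h23 : Dset {2, 3} W = Dset {1, 2, 3} W := by
      have := congrArg (Dset {2, 3}) h
      simp only [LV, Dset_add, Dset_sub, Dset_Dset, insert_eq, union_comm, union_left_comm,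
        union_idempotent] at this ⊢
      linear_combination (norm := abel) -this
    refine ⟨h01, h23, ?_⟩
    rw [LV] at h
    linear_combination (norm := abel) h + h23 + h01
  · rw [LV]
    linear_combination (norm := abel) h - h23 - h01

lemma IsProc.Dset_one {W : PMat d} (hW : IsProc W) :
    IsProc (Dset {1} W) ∧ OrderedBA (Dset {1} W) := by
  obtain ⟨hpsd, hLV, htr⟩ := hW
  obtain ⟨h01, -, -⟩ := (LV_eq_self_iff W).1 hLV
  simp only [insert_eq] at h01
  refine ⟨⟨Dset_posSemidef _ hpsd, (LV_eq_self_iff _).2 ⟨?_, ?_, ?_⟩, ?_⟩, ?_, ?_⟩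
  all_goals simp only [Dset_trace, htr, Dset_Dset, insert_eq, union_comm, union_left_comm,
    union_idempotent, union_left_idem, add_sub_cancel_right, h01]

lemma IsProc.Dset_three {W : PMat d} (hW : IsProc W) :
    IsProc (Dset {3} W) ∧ OrderedAB (Dset {3} W) := by
  obtain ⟨hpsd, hLV, htr⟩ := hW
  obtain ⟨-, h23, -⟩ := (LV_eq_self_iff W).1 hLV
  simp only [insert_eq] at h23
  refine ⟨⟨Dset_posSemidef _ hpsd, (LV_eq_self_iff _).2 ⟨?_, ?_, ?_⟩, ?_⟩, ?_, ?_⟩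
  all_goals simp only [Dset_trace, htr, Dset_Dset, insert_eq, union_comm, union_left_comm,
    union_idempotent, add_sub_cancel_left, h23]

lemma IsFree.Dset_eq_Dset_one_three {S : Finset (Fin 4)} (hS : S ⊆ {1, 3}) {W : PMat d}
    (hW : IsFree (Dset S W)) : Dset S W = Dset {1, 3} W := by
  simpa only [Dset_Dset, union_eq_left.2 hS, eq_comm] using hW.2

lemma eq_Dset_one_three_of_LV_eq_self {W : PMat d} (hW : LV W = W)
    (h1 : Dset {1} W = Dset {1, 3} W) (h3 : Dset {3} W = Dset {1, 3} W) :
    W = Dset {1, 3} W := by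
  obtain ⟨-, -, h⟩ := (LV_eq_self_iff W).1 hW
  linear_combination (norm := abel) h1 + h3 - h

end TwoParty

theorem prop4_general {d : Fin 4 → ℕ}
    (W : PMat d) (hW : IsProc W) :
    (IsProc (Dset ({1} : Finset (Fin 4)) W) ∧ OrderedBA (Dset ({1} : Finset (Fin 4)) W)) ∧
    (IsProc (Dset ({3} : Finset (Fin 4)) W) ∧ OrderedAB (Dset ({3} : Finset (Fin 4)) W)) ∧
    (Dset ({1, 3} : Finset (Fin 4)) W ≠ W →
      (¬ IsFree (Dset ({1} : Finset (Fin 4)) W) ∨ ¬ IsFree (Dset ({3} : Finset (Fin 4)) W))) ∧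
    ((Dset ({1} : Finset (Fin 4)) W = Dset ({1, 3} : Finset (Fin 4)) W ∧
        Dset ({3} : Finset (Fin 4)) W = Dset ({1, 3} : Finset (Fin 4)) W) →
      W = Dset ({1, 3} : Finset (Fin 4)) W) := by
  refine ⟨hW.Dset_one, hW.Dset_three, fun hne => ?_,
    fun ⟨h1, h3⟩ => eq_Dset_one_three_of_LV_eq_self hW.2.1 h1 h3⟩
  by_contra! ⟨hfree1, hfree3⟩
  exact hne (eq_Dset_one_three_of_LV_eq_self hW.2.1
    (hfree1.Dset_eq_Dset_one_three (by decide)) (hfree3.Dset_eq_Dset_one_three (by decide))).symm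

/-- Proposition 4: degradation to a one-way signalling ordered process.
(a) `D_{A_O}(W)` is a process causally ordered `B ≺ A`, `D_{B_O}(W)` is a process causally
ordered `A ≺ B`; (b) if `W` is not free then at least one of them is not free;
equivalently, if both are free then `W = D_{A_O B_O}(W)`. -/
theorem prop4 {d : Fin 4 → ℕ} (hd : ∀ i, 0 < d i)
    (W : PMat d) (hW : IsProc W) :
    (IsProc (Dset ({1} : Finset (Fin 4)) W) ∧ OrderedBA (Dset ({1} : Finset (Fin 4)) W)) ∧
    (IsProc (Dset ({3} : Finset (Fin 4)) W) ∧ OrderedAB (Dset ({3} : Finset (Fin 4)) W)) ∧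
    (Dset ({1, 3} : Finset (Fin 4)) W ≠ W →
      (¬ IsFree (Dset ({1} : Finset (Fin 4)) W) ∨ ¬ IsFree (Dset ({3} : Finset (Fin 4)) W))) ∧
    ((Dset ({1} : Finset (Fin 4)) W = Dset ({1, 3} : Finset (Fin 4)) W ∧
        Dset ({3} : Finset (Fin 4)) W = Dset ({1, 3} : Finset (Fin 4)) W) →
      W = Dset ({1, 3} : Finset (Fin 4)) W) :=
  prop4_general W hW
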